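/- For all texts A and B of equal length N ≥ 1, d_2(A, B, 0) = d_labbe(A, B); that is, the global distance with discounting factor 0, namely (1/N) · min over permutations φ of {1,...,N} of ∑_{i=1}^N dphrase(i, φ(i), 0), equals the 1-gram distance (∑_w |F_A(w) − F_B(w)|)/(2N), where the sum ranges over all words w occurring in A or B. -/

import Mathlib

noncomputable section

/-- Extended Kronecker indicator for texts `A` (of length `NA`) and `B` (of length `NB`),
indexed 1-based: `δ_{i,j} = 0` if `i ≤ NA`, `j ≤ NB` and `a_i = b_j`, and `1` otherwise. -/
def delta {W : Type*} [DecidableEq W] (A B : ℕ → W) (NA NB : ℕ) (i j : ℕ) : ℝ :=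
  if i ≤ NA ∧ j ≤ NB ∧ A i = B j then 0 else 1

/-- The position match `dphrase(i, j, λ) = ∑_{k=0}^∞ λ^k δ_{i+k, j+k}`. -/
def dphrase {W : Type*} [DecidableEq W] (A B : ℕ → W) (NA NB : ℕ) (lam : ℝ)
    (i j : ℕ) : ℝ :=
  ∑' k : ℕ, lam ^ k * delta A B NA NB (i + k) (j + k)

/-- The absolute frequency `F_A(w)` of the word `w` in the text `A` of length `N`. -/
def freq {W : Type*} [DecidableEq W] (A : ℕ → W) (N : ℕ) (w : W) : ℕ :=
  ((Finset.Icc 1 N).filter fun i => A i = w).card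

/-- The 1-gram distance between texts `A` and `B` of equal length `N`:
`(∑_w |F_A(w) − F_B(w)|) / (2N)`, the sum ranging over all words occurring in `A` or `B`. -/
def dlabbe {W : Type*} [DecidableEq W] (A B : ℕ → W) (N : ℕ) : ℝ :=
  (∑ w ∈ (Finset.Icc 1 N).image A ∪ (Finset.Icc 1 N).image B,
      |(freq A N w : ℝ) - (freq B N w : ℝ)|) / (2 * N)

/-- The assignment distance
`d_2(A, B, λ) = (1 − λ)(1/N) · min_{φ ∈ S_N} ∑_{i=1}^N dphrase(i, φ(i), λ)`
between texts `A` and `B` of equal length `N`. -/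
def d2 {W : Type*} [DecidableEq W] (A B : ℕ → W) (N : ℕ) (lam : ℝ) : ℝ :=
  (1 - lam) * (1 / N) *
    ⨅ φ : Equiv.Perm (Fin N),
      ∑ i : Fin N, dphrase A B N N lam ((i : ℕ) + 1) ((φ i : ℕ) + 1)

/-! At `λ = 0` the position match is the indicator of a mismatch, so `N · d₂(A, B, 0)` is the
least number of mismatched positions `i`, `a_i ≠ b_{φ(i)}`, over all permutations `φ`.
A permutation matches at most `∑_w min(F_A(w), F_B(w))` positions, counting word by word, and one
with the most matches attains this bound: otherwise some word `w` has an unmatched occurrence `i`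
in `A` and an unmatched occurrence `φ(j)` in `B`, and precomposing `φ` with the transposition of
`i` and `j` matches `i` without unmatching anything. Finally `|a - b| = a + b - 2 min(a, b)` turns
`∑_w |F_A(w) - F_B(w)|` into `2 (N - ∑_w min(F_A(w), F_B(w)))`. -/

open Finset Equiv

namespace TextDistance

section Matching

variable {α W : Type*} [Fintype α] [DecidableEq W]

def matchSet (f g : α → W) (σ : Perm α) : Finset α := {i | f i = g (σ i)}

def vocab (f g : α → W) : Finset W := univ.image f ∪ univ.image g

def overlap (f g : α → W) : ℕ := ∑ w ∈ vocab f g, min #{i | f i = w} #{i | g i = w}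

variable {f g : α → W}

@[simp]
theorem mem_matchSet {σ : Perm α} {i : α} : i ∈ matchSet f g σ ↔ f i = g (σ i) := by
  simp [matchSet]

theorem sum_card_fiber_vocab_left (f g : α → W) :
    ∑ w ∈ vocab f g, #{i | f i = w} = Fintype.card α :=
  (card_eq_sum_card_fiberwise fun i _ => mem_union_left _ (mem_image_of_mem f (mem_univ i))).symm

theorem sum_card_fiber_vocab_right (f g : α → W) :
    ∑ w ∈ vocab f g, #{i | g i = w} = Fintype.card α :=
  (card_eq_sum_card_fiberwise fun i _ => mem_union_right _ (mem_image_of_mem g (mem_univ i))).symm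

theorem card_fiber_comp_perm (g : α → W) (σ : Perm α) (w : W) :
    #{i | g (σ i) = w} = #{i | g i = w} :=
  card_equiv σ fun i => by simp

theorem card_matchSet_eq_sum (σ : Perm α) :
    #(matchSet f g σ) = ∑ w ∈ vocab f g, #{i | f i = w ∧ g (σ i) = w} := by
  rw [card_eq_sum_card_fiberwise fun i _ => mem_union_left _ (mem_image_of_mem f (mem_univ i))]
  refine sum_congr rfl fun w _ => congrArg card ?_
  ext i
  simp only [mem_filter, mem_matchSet, mem_univ, true_and]
  exact ⟨fun ⟨h, hw⟩ => ⟨hw, h ▸ hw⟩, fun ⟨hw, hg⟩ => ⟨hw.trans hg.symm, hw⟩⟩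

theorem card_matchSet_le_overlap (σ : Perm α) : #(matchSet f g σ) ≤ overlap f g := by
  rw [card_matchSet_eq_sum]
  refine sum_le_sum fun w _ => le_min ?_ ?_
  · exact card_le_card (monotone_filter_right _ fun _ _ h => h.1)
  · rw [← card_fiber_comp_perm g σ]
    exact card_le_card (monotone_filter_right _ fun _ _ h => h.2)

theorem exists_mismatch_pair_of_card_matchSet_lt {σ : Perm α}
    (h : #(matchSet f g σ) < overlap f g) :
    ∃ i j, f i ≠ g (σ i) ∧ f j ≠ g (σ j) ∧ f i = g (σ j) := by
  rw [card_matchSet_eq_sum] at h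
  obtain ⟨w, -, hw⟩ := exists_lt_of_sum_lt h
  obtain ⟨i, hi, hi'⟩ := not_subset.1 fun hsub =>
    (card_le_card hsub).not_gt (hw.trans_le (min_le_left _ _))
  rw [← card_fiber_comp_perm g σ] at hw
  obtain ⟨j, hj, hj'⟩ := not_subset.1 fun hsub =>
    (card_le_card hsub).not_gt (hw.trans_le (min_le_right _ _))
  simp only [mem_filter, mem_univ, true_and, not_and] at hi hi' hj hj'
  exact ⟨i, j, fun h => hi' hi (h ▸ hi), fun h => hj' (h ▸ hj) hj, hi.trans hj.symm⟩

theorem card_matchSet_lt_mul_swap [DecidableEq α] {σ : Perm α} {i j : α}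
    (hi : f i ≠ g (σ i)) (hj : f j ≠ g (σ j)) (hij : f i = g (σ j)) :
    #(matchSet f g σ) < #(matchSet f g (σ * swap i j)) := by
  have hiσ : i ∉ matchSet f g σ := mt mem_matchSet.1 hi
  refine card_lt_card (ssubset_iff.2 ⟨i, hiσ, insert_subset_iff.2 ⟨?_, fun k hk => ?_⟩⟩)
  · rwa [mem_matchSet, Perm.mul_apply, swap_apply_left]
  · have hki : k ≠ i := by rintro rfl; exact hiσ hk
    have hkj : k ≠ j := by rintro rfl; exact hj (mem_matchSet.1 hk)
    rwa [mem_matchSet, Perm.mul_apply, swap_apply_of_ne_of_ne hki hkj, ← mem_matchSet]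

theorem exists_card_matchSet_eq_overlap (f g : α → W) :
    ∃ σ : Perm α, #(matchSet f g σ) = overlap f g := by
  classical
  obtain ⟨σ, hσ⟩ := Finite.exists_max fun σ : Perm α => #(matchSet f g σ)
  refine ⟨σ, (card_matchSet_le_overlap σ).antisymm (not_lt.1 fun hlt => ?_)⟩
  obtain ⟨i, j, hi, hj, hij⟩ := exists_mismatch_pair_of_card_matchSet_lt hlt
  exact (card_matchSet_lt_mul_swap hi hj hij).not_ge (hσ _)

theorem card_mismatch_add_card_matchSet (f g : α → W) (σ : Perm α) :
    #{i | f i ≠ g (σ i)} + #(matchSet f g σ) = Fintype.card α := by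
  rw [add_comm, matchSet, card_filter_add_card_filter_not, card_univ]

theorem isLeast_card_mismatch (f g : α → W) :
    IsLeast (Set.range fun σ : Perm α => (#{i | f i ≠ g (σ i)} : ℝ))
      (Fintype.card α - overlap f g) := by
  have card_mismatch (σ : Perm α) : (#{i | f i ≠ g (σ i)} : ℝ) = Fintype.card α - #(matchSet f g σ) := by
    rw [← card_mismatch_add_card_matchSet f g σ]
    push_cast
    ring
  obtain ⟨σ₀, hσ₀⟩ := exists_card_matchSet_eq_overlap f g
  refine ⟨⟨σ₀, by dsimp only; rw [card_mismatch, hσ₀]⟩, ?_⟩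
  rintro _ ⟨σ, rfl⟩
  dsimp only
  rw [card_mismatch]
  gcongr
  exact_mod_cast card_matchSet_le_overlap σ

theorem abs_sub_eq_add_sub_two_mul_min (a b : ℝ) : |a - b| = a + b - 2 * min a b := by
  rw [abs_sub_comm, ← max_sub_min_eq_abs]
  linarith [min_add_max a b]

theorem sum_abs_sub_card_fiber (f g : α → W) :
    ∑ w ∈ vocab f g, |(#{i | f i = w} : ℝ) - #{i | g i = w}| =
      2 * (Fintype.card α - overlap f g) := by
  simp only [abs_sub_eq_add_sub_two_mul_min, sum_sub_distrib, sum_add_distrib, ← mul_sum,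
    overlap, Nat.cast_sum, Nat.cast_min]
  rw [← Nat.cast_sum, ← Nat.cast_sum, sum_card_fiber_vocab_left, sum_card_fiber_vocab_right]
  ring

end Matching

section Texts

variable {W : Type*} [DecidableEq W]

theorem dphrase_zero (A B : ℕ → W) (NA NB i j : ℕ) :
    dphrase A B NA NB 0 i j = delta A B NA NB i j := by
  rw [dphrase, tsum_eq_single 0 fun k hk => by simp [zero_pow hk]]
  simp

theorem delta_of_le (A B : ℕ → W) {NA NB i j : ℕ} (hi : i ≤ NA) (hj : j ≤ NB) :
    delta A B NA NB i j = if A i = B j then 0 else 1 := by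
  simp [delta, hi, hj]

theorem image_succ_univ (N : ℕ) :
    (univ : Finset (Fin N)).image (fun i : Fin N => (i : ℕ) + 1) = Icc 1 N := by
  ext n
  simp only [mem_image, mem_univ, true_and, mem_Icc]
  refine ⟨by rintro ⟨i, rfl⟩; omega, fun h => ⟨⟨n - 1, by omega⟩, by simp only; omega⟩⟩

theorem image_Icc_one (A : ℕ → W) (N : ℕ) :
    (Icc 1 N).image A = univ.image fun i : Fin N => A (i + 1) := by
  rw [← image_succ_univ, image_image]
  rfl

theorem freq_eq_card_fiber (A : ℕ → W) (N : ℕ) (w : W) :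
    freq A N w = #{i : Fin N | A (i + 1) = w} := by
  rw [freq, ← image_succ_univ, filter_image,
    card_image_of_injective _ fun i j h => Fin.val_injective (Nat.succ_injective h)]

theorem sum_dphrase_zero (A B : ℕ → W) (N : ℕ) (φ : Perm (Fin N)) :
    ∑ i : Fin N, dphrase A B N N 0 ((i : ℕ) + 1) ((φ i : ℕ) + 1) =
      #{i : Fin N | A (i + 1) ≠ B (φ i + 1)} := by
  rw [← sum_boole]
  refine sum_congr rfl fun i _ => ?_
  rw [dphrase_zero, delta_of_le A B i.isLt (φ i).isLt, ite_not]

end Texts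

end TextDistance

open TextDistance

theorem d2_zero_eq_dlabbe_general {W : Type*} [DecidableEq W]
    (A B : ℕ → W) (N : ℕ) :
    d2 A B N 0 = dlabbe A B N := by
  set f : Fin N → W := fun i => A (i + 1)
  set g : Fin N → W := fun i => B (i + 1)
  have hinf : ⨅ φ : Perm (Fin N), ∑ i : Fin N, dphrase A B N N 0 (i + 1) (φ i + 1) =
      Fintype.card (Fin N) - overlap f g := by
    simp only [sum_dphrase_zero]
    exact (isLeast_card_mismatch f g).csInf_eq
  have hsum : ∑ w ∈ (Icc 1 N).image A ∪ (Icc 1 N).image B,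
      |(freq A N w : ℝ) - freq B N w| = 2 * (Fintype.card (Fin N) - overlap f g) := by
    simp only [image_Icc_one, freq_eq_card_fiber]
    exact sum_abs_sub_card_fiber f g
  rw [d2, dlabbe, hinf, hsum, Fintype.card_fin]
  ring

/-- For all texts `A`, `B` of equal length `N ≥ 1`, `d_2(A, B, 0) = d_labbe(A, B)`. -/
theorem d2_zero_eq_dlabbe {W : Type*} [DecidableEq W]
    (A B : ℕ → W) (N : ℕ) (hN : 1 ≤ N) :
    d2 A B N 0 = dlabbe A B N :=
  d2_zero_eq_dlabbe_general A B N
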